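/- arXiv:math/0404535 — 4 statements merged into one kernel-verified Lean document; each statement's English description precedes it below -/
import Mathlib

section
/- Let μ be a probability measure on the unit circle with infinite support, and let Φ_n(μ, z) denote the n-th monic orthogonal polynomial with respect to μ. Then all zeros of Φ_n(μ, ·) lie in the open unit disk. -/
open Complex Polynomial MeasureTheory

private lemma norm_exp_I_mul (t : ℝ) : ‖Complex.exp (Complex.I * t)‖ = 1 := by
  rw [Complex.norm_exp]; simp

private lemma continuous_e : Continuous (fun t : ℝ => Complex.exp (Complex.I * t)) :=
  Complex.continuous_exp.comp (continuous_const.mul Complex.continuous_ofReal)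

private lemma integrableComp_aux (μ : Measure ℝ) [IsProbabilityMeasure μ]
    {E : Type*} [NormedAddCommGroup E] (f : ℂ → E) (hf : Continuous f) :
    Integrable (fun t : ℝ => f (Complex.exp (Complex.I * t))) μ := by
  obtain ⟨C, hC⟩ := (isCompact_sphere (0:ℂ) 1).exists_bound_of_continuousOn hf.continuousOn
  refine Integrable.mono' (integrable_const C) ?_ ?_
  · exact (hf.comp continuous_e).aestronglyMeasurable
  · filter_upwards with t
    exact hC _ (by simp [mem_sphere_zero_iff_norm, norm_exp_I_mul t])

private lemma exp_pow (k : ℕ) (t : ℝ) :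
    Complex.exp (Complex.I * t) ^ k = Complex.exp (Complex.I * (k:ℕ) * t) := by
  rw [← Complex.exp_nat_mul]; ring_nf

private lemma integral_normSq_pos (μ : Measure ℝ) [IsProbabilityMeasure μ]
    (hinf : ∀ s : Finset ℂ, μ {t : ℝ | Complex.exp (Complex.I * t) ∈ s} < 1)
    (P : Polynomial ℂ) (hP : P ≠ 0) :
    0 < ∫ t, Complex.normSq (P.eval (Complex.exp (Complex.I * t))) ∂μ := by
  rw [integral_pos_iff_support_of_nonneg (fun t => Complex.normSq_nonneg _)
    (integrableComp_aux μ (fun z => Complex.normSq (P.eval z))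
      (Complex.continuous_normSq.comp (Polynomial.continuous P)))]
  by_contra h
  push_neg at h
  have h0 : μ (Function.support fun t : ℝ => Complex.normSq (P.eval (Complex.exp (Complex.I * t)))) = 0 :=
    le_antisymm h zero_le
  have hsub : (Set.univ : Set ℝ) ⊆
      (Function.support fun t : ℝ => Complex.normSq (P.eval (Complex.exp (Complex.I * t)))) ∪
      {t : ℝ | Complex.exp (Complex.I * t) ∈ P.roots.toFinset} := by
    intro t _
    by_cases hz : P.eval (Complex.exp (Complex.I * t)) = 0
    · right
      simp only [Set.mem_setOf_eq, Multiset.mem_toFinset, Polynomial.mem_roots hP]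
      exact hz
    · left
      simp [Function.mem_support, Complex.normSq_eq_zero, hz]
  have h1 : (1 : ENNReal) ≤ μ {t : ℝ | Complex.exp (Complex.I * t) ∈ P.roots.toFinset} := by
    calc (1:ENNReal) = μ Set.univ := (measure_univ).symm
    _ ≤ _ + _ := (measure_mono hsub).trans (measure_union_le _ _)
    _ = μ {t : ℝ | Complex.exp (Complex.I * t) ∈ P.roots.toFinset} := by rw [h0, zero_add]
  exact absurd h1 (not_le.mpr (hinf P.roots.toFinset))


/-- Let `μ` be a probability measure on the unit circle (parametrized by `t ∈ [-π, π)`) with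
infinite support (no finite subset of the circle carries all the mass).  If `Φ` is the `n`-th
monic orthogonal polynomial for `μ` (monic, degree `n`, orthogonal to `e^{ikt}` for `k < n`),
then all zeros of `Φ` lie in the open unit disk. -/
theorem zeros_of_orthogonal_poly_in_disk (μ : Measure ℝ) [IsProbabilityMeasure μ]
    (hsupp : μ (Set.Ico (-Real.pi) Real.pi)ᶜ = 0)
    (hinf : ∀ s : Finset ℂ, μ {t : ℝ | Complex.exp (Complex.I * t) ∈ s} < 1)
    (n : ℕ) (Φ : Polynomial ℂ) (hmonic : Φ.Monic) (hdeg : Φ.natDegree = n)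
    (horth : ∀ k < n, ∫ t, Φ.eval (Complex.exp (Complex.I * t)) *
      (starRingEnd ℂ) (Complex.exp (Complex.I * (k : ℕ) * t)) ∂μ = 0)
    (w : ℂ) (hw : Φ.IsRoot w) : ‖w‖ < 1 := by
  classical
  have hΦ0 : Φ ≠ 0 := hmonic.ne_zero
  -- n ≥ 1
  have hn : n ≠ 0 := by
    rintro rfl
    have h1 : Φ = 1 := (Polynomial.Monic.natDegree_eq_zero hmonic).mp hdeg
    rw [h1] at hw
    simp [Polynomial.IsRoot] at hw
  -- factor Φ = (X - C w) * Ψ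
  set Ψ : Polynomial ℂ := Φ /ₘ (X - C w) with hΨdef
  have hfac : (X - C w) * Ψ = Φ := (Polynomial.mul_divByMonic_eq_iff_isRoot).mpr hw
  have hΨmonic : Ψ.Monic := (Polynomial.monic_X_sub_C w).of_mul_monic_left
    (by rw [hfac]; exact hmonic)
  have hΨ0 : Ψ ≠ 0 := hΨmonic.ne_zero
  have hΨdeg : Ψ.natDegree < n := by
    have h := Polynomial.natDegree_mul (Polynomial.X_sub_C_ne_zero w) hΨ0
    rw [hfac, hdeg, Polynomial.natDegree_X_sub_C] at h
    omega
  have hfe : ∀ z : ℂ, Φ.eval z = (z - w) * Ψ.eval z := by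
    intro z; rw [← hfac]; simp
  -- orthogonality of Φ to Ψ
  have hint : ∀ k : ℕ, Integrable (fun t : ℝ => Φ.eval (Complex.exp (Complex.I * t)) *
      (starRingEnd ℂ) (Complex.exp (Complex.I * (k:ℕ) * t))) μ := by
    intro k
    have h := integrableComp_aux μ
      (fun z => Φ.eval z * (starRingEnd ℂ) (z ^ k))
      ((Polynomial.continuous Φ).mul (Complex.continuous_conj.comp (continuous_pow k)))
    refine h.congr (ae_of_all _ fun t => ?_)
    simp only [exp_pow]
  have hO : ∫ t, Φ.eval (Complex.exp (Complex.I * t)) *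
      (starRingEnd ℂ) (Ψ.eval (Complex.exp (Complex.I * t))) ∂μ = 0 := by
    have hpt : ∀ t : ℝ, Φ.eval (Complex.exp (Complex.I * t)) *
        (starRingEnd ℂ) (Ψ.eval (Complex.exp (Complex.I * t))) =
        ∑ k ∈ Finset.range n, (starRingEnd ℂ) (Ψ.coeff k) *
          (Φ.eval (Complex.exp (Complex.I * t)) *
            (starRingEnd ℂ) (Complex.exp (Complex.I * (k:ℕ) * t))) := by
      intro t
      rw [Polynomial.eval_eq_sum_range' hΨdeg, map_sum, Finset.mul_sum]
      refine Finset.sum_congr rfl fun k _ => ?_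
      rw [map_mul, exp_pow]
      ring
    calc ∫ t, Φ.eval (Complex.exp (Complex.I * t)) *
        (starRingEnd ℂ) (Ψ.eval (Complex.exp (Complex.I * t))) ∂μ
        = ∫ t, ∑ k ∈ Finset.range n, (starRingEnd ℂ) (Ψ.coeff k) *
          (Φ.eval (Complex.exp (Complex.I * t)) *
            (starRingEnd ℂ) (Complex.exp (Complex.I * (k:ℕ) * t))) ∂μ :=
          integral_congr_ae (ae_of_all _ hpt)
      _ = ∑ k ∈ Finset.range n, ∫ t, (starRingEnd ℂ) (Ψ.coeff k) *
          (Φ.eval (Complex.exp (Complex.I * t)) *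
            (starRingEnd ℂ) (Complex.exp (Complex.I * (k:ℕ) * t))) ∂μ :=
          integral_finset_sum _ (fun k _ => (hint k).const_mul _)
      _ = 0 := by
          refine Finset.sum_eq_zero fun k hk => ?_
          rw [integral_const_mul, horth k (Finset.mem_range.mp hk), mul_zero]
  -- pointwise key identity
  have hz1 : ∀ t : ℝ, Complex.exp (Complex.I * t) *
      (starRingEnd ℂ) (Complex.exp (Complex.I * t)) = 1 := by
    intro t
    rw [Complex.mul_conj]
    norm_cast
    rw [Complex.normSq_eq_norm_sq, norm_exp_I_mul]
    norm_num
  have key : ∀ t : ℝ,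
      Ψ.eval (Complex.exp (Complex.I * t)) * (starRingEnd ℂ) (Ψ.eval (Complex.exp (Complex.I * t))) =
      Φ.eval (Complex.exp (Complex.I * t)) * (starRingEnd ℂ) (Φ.eval (Complex.exp (Complex.I * t)))
      + (starRingEnd ℂ) w * (Φ.eval (Complex.exp (Complex.I * t)) *
          (starRingEnd ℂ) (Ψ.eval (Complex.exp (Complex.I * t))))
      + w * ((starRingEnd ℂ) (Φ.eval (Complex.exp (Complex.I * t))) *
          Ψ.eval (Complex.exp (Complex.I * t)))
      + (w * (starRingEnd ℂ) w) * (Ψ.eval (Complex.exp (Complex.I * t)) *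
          (starRingEnd ℂ) (Ψ.eval (Complex.exp (Complex.I * t)))) := by
    intro t
    have h1 := hfe (Complex.exp (Complex.I * t))
    have h2 : (starRingEnd ℂ) ((Complex.exp (Complex.I * t) - w) * Ψ.eval (Complex.exp (Complex.I * t))) =
        ((starRingEnd ℂ) (Complex.exp (Complex.I * t)) - (starRingEnd ℂ) w) *
          (starRingEnd ℂ) (Ψ.eval (Complex.exp (Complex.I * t))) := by
      rw [map_mul, map_sub]
    rw [h1, h2]
    linear_combination (-(Ψ.eval (Complex.exp (Complex.I * t)) *
      (starRingEnd ℂ) (Ψ.eval (Complex.exp (Complex.I * t))))) * hz1 t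
  -- integrabilities of the four terms
  have cΦ : Continuous fun z : ℂ => Φ.eval z := Polynomial.continuous Φ
  have cΨ : Continuous fun z : ℂ => Ψ.eval z := Polynomial.continuous Ψ
  have i1 : Integrable (fun t : ℝ => Φ.eval (Complex.exp (Complex.I * t)) *
      (starRingEnd ℂ) (Φ.eval (Complex.exp (Complex.I * t)))) μ :=
    integrableComp_aux μ (fun z => Φ.eval z * (starRingEnd ℂ) (Φ.eval z))
      (cΦ.mul (Complex.continuous_conj.comp cΦ))
  have i2 : Integrable (fun t : ℝ => (starRingEnd ℂ) w * (Φ.eval (Complex.exp (Complex.I * t)) *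
      (starRingEnd ℂ) (Ψ.eval (Complex.exp (Complex.I * t))))) μ :=
    integrableComp_aux μ (fun z => (starRingEnd ℂ) w * (Φ.eval z * (starRingEnd ℂ) (Ψ.eval z)))
      (continuous_const.mul (cΦ.mul (Complex.continuous_conj.comp cΨ)))
  have i3 : Integrable (fun t : ℝ => w * ((starRingEnd ℂ) (Φ.eval (Complex.exp (Complex.I * t))) *
      Ψ.eval (Complex.exp (Complex.I * t)))) μ :=
    integrableComp_aux μ (fun z => w * ((starRingEnd ℂ) (Φ.eval z) * Ψ.eval z))
      (continuous_const.mul ((Complex.continuous_conj.comp cΦ).mul cΨ))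
  have i4 : Integrable (fun t : ℝ => (w * (starRingEnd ℂ) w) *
      (Ψ.eval (Complex.exp (Complex.I * t)) *
        (starRingEnd ℂ) (Ψ.eval (Complex.exp (Complex.I * t))))) μ :=
    integrableComp_aux μ (fun z => (w * (starRingEnd ℂ) w) * (Ψ.eval z * (starRingEnd ℂ) (Ψ.eval z)))
      (continuous_const.mul (cΨ.mul (Complex.continuous_conj.comp cΨ)))
  -- the main integral identity
  have hS : (∫ t, Ψ.eval (Complex.exp (Complex.I * t)) *
        (starRingEnd ℂ) (Ψ.eval (Complex.exp (Complex.I * t))) ∂μ) =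
      (∫ t, Φ.eval (Complex.exp (Complex.I * t)) *
        (starRingEnd ℂ) (Φ.eval (Complex.exp (Complex.I * t))) ∂μ)
      + (w * (starRingEnd ℂ) w) * (∫ t, Ψ.eval (Complex.exp (Complex.I * t)) *
        (starRingEnd ℂ) (Ψ.eval (Complex.exp (Complex.I * t))) ∂μ) := by
    have hconjO : ∫ t, (starRingEnd ℂ) (Φ.eval (Complex.exp (Complex.I * t))) *
        Ψ.eval (Complex.exp (Complex.I * t)) ∂μ = 0 := by
      have heq : (fun t : ℝ => (starRingEnd ℂ) (Φ.eval (Complex.exp (Complex.I * t))) *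
          Ψ.eval (Complex.exp (Complex.I * t))) =
          fun t : ℝ => (starRingEnd ℂ) (Φ.eval (Complex.exp (Complex.I * t)) *
            (starRingEnd ℂ) (Ψ.eval (Complex.exp (Complex.I * t)))) := by
        funext t; rw [map_mul, Complex.conj_conj]
      rw [heq, integral_conj, hO, map_zero]
    calc (∫ t, Ψ.eval (Complex.exp (Complex.I * t)) *
          (starRingEnd ℂ) (Ψ.eval (Complex.exp (Complex.I * t))) ∂μ)
        = ∫ t, (Φ.eval (Complex.exp (Complex.I * t)) *
            (starRingEnd ℂ) (Φ.eval (Complex.exp (Complex.I * t)))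
          + (starRingEnd ℂ) w * (Φ.eval (Complex.exp (Complex.I * t)) *
              (starRingEnd ℂ) (Ψ.eval (Complex.exp (Complex.I * t))))
          + w * ((starRingEnd ℂ) (Φ.eval (Complex.exp (Complex.I * t))) *
              Ψ.eval (Complex.exp (Complex.I * t)))
          + (w * (starRingEnd ℂ) w) * (Ψ.eval (Complex.exp (Complex.I * t)) *
              (starRingEnd ℂ) (Ψ.eval (Complex.exp (Complex.I * t))))) ∂μ :=
          integral_congr_ae (ae_of_all _ key)
      _ = _ := by
          have i12 : Integrable (fun t : ℝ =>
              Φ.eval (Complex.exp (Complex.I * t)) * (starRingEnd ℂ) (Φ.eval (Complex.exp (Complex.I * t)))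
              + (starRingEnd ℂ) w * (Φ.eval (Complex.exp (Complex.I * t)) *
                  (starRingEnd ℂ) (Ψ.eval (Complex.exp (Complex.I * t))))) μ := i1.add i2
          have i123 : Integrable (fun t : ℝ =>
              Φ.eval (Complex.exp (Complex.I * t)) * (starRingEnd ℂ) (Φ.eval (Complex.exp (Complex.I * t)))
              + (starRingEnd ℂ) w * (Φ.eval (Complex.exp (Complex.I * t)) *
                  (starRingEnd ℂ) (Ψ.eval (Complex.exp (Complex.I * t))))
              + w * ((starRingEnd ℂ) (Φ.eval (Complex.exp (Complex.I * t))) *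
                  Ψ.eval (Complex.exp (Complex.I * t)))) μ := i12.add i3
          rw [integral_add i123 i4, integral_add i12 i3, integral_add i1 i2,
            integral_const_mul, integral_const_mul, integral_const_mul,
            hO, hconjO, mul_zero, mul_zero, add_zero, add_zero]
  -- pass to real integrals
  have hTre : (∫ t, Φ.eval (Complex.exp (Complex.I * t)) *
      (starRingEnd ℂ) (Φ.eval (Complex.exp (Complex.I * t))) ∂μ) =
      ((∫ t, Complex.normSq (Φ.eval (Complex.exp (Complex.I * t))) ∂μ : ℝ) : ℂ) := by
    calc _ = ∫ t, ((Complex.normSq (Φ.eval (Complex.exp (Complex.I * t))) : ℝ) : ℂ) ∂μ :=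
          integral_congr_ae (ae_of_all _ fun t => Complex.mul_conj _)
      _ = _ := integral_ofReal
  have hSre : (∫ t, Ψ.eval (Complex.exp (Complex.I * t)) *
      (starRingEnd ℂ) (Ψ.eval (Complex.exp (Complex.I * t))) ∂μ) =
      ((∫ t, Complex.normSq (Ψ.eval (Complex.exp (Complex.I * t))) ∂μ : ℝ) : ℂ) := by
    calc _ = ∫ t, ((Complex.normSq (Ψ.eval (Complex.exp (Complex.I * t))) : ℝ) : ℂ) ∂μ :=
          integral_congr_ae (ae_of_all _ fun t => Complex.mul_conj _)
      _ = _ := integral_ofReal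
  set A : ℝ := ∫ t, Complex.normSq (Φ.eval (Complex.exp (Complex.I * t))) ∂μ with hAdef
  set B : ℝ := ∫ t, Complex.normSq (Ψ.eval (Complex.exp (Complex.I * t))) ∂μ with hBdef
  have hA : 0 < A := integral_normSq_pos μ hinf Φ hΦ0
  have hB : 0 < B := integral_normSq_pos μ hinf Ψ hΨ0
  rw [hTre, hSre, Complex.mul_conj] at hS
  have hreal : B = A + Complex.normSq w * B := by
    exact_mod_cast hS
  have hlt : Complex.normSq w < 1 := by nlinarith
  have hns : ‖w‖ ^ 2 = Complex.normSq w := by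
    rw [Complex.sq_norm]
  nlinarith [norm_nonneg w]
end

section
/- There is no probability measure μ on the unit circle with infinite support such that the set L_μ of limit points of the zeros of all the monic orthogonal polynomials Φ_n(μ) equals the interval [1/2, 1]. -/
open Complex Polynomial MeasureTheory

/-! Auxiliary definitions -/

noncomputable def ee (t : ℝ) : ℂ := Complex.exp (Complex.I * t)

noncomputable def FF (p : Polynomial ℂ) (t : ℝ) : ℝ := Complex.normSq (p.eval (ee t))

def SS : Set ℂ := {z : ℂ | z.im = 0 ∧ z.re ∈ Set.Icc (1 / 2 : ℝ) 1}

lemma SS_nonempty : SS.Nonempty := ⟨1, by simp [SS], by norm_num [SS]⟩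

lemma ee_abs (t : ℝ) : ‖ee t‖ = 1 := by
  rw [ee, Complex.norm_exp]; simp

lemma ee_normSq (t : ℝ) : Complex.normSq (ee t) = 1 := by
  rw [Complex.normSq_eq_norm_sq, ee_abs]; norm_num

lemma ee_continuous : Continuous ee :=
  Complex.continuous_exp.comp (continuous_const.mul Complex.continuous_ofReal)

lemma multiset_pow_card_le_prod (s : Multiset ℝ) (a : ℝ) (ha : 0 ≤ a)
    (h : ∀ x ∈ s, a ≤ x) : a ^ Multiset.card s ≤ s.prod := by
  induction s using Multiset.induction with
  | empty => simp
  | cons b s ih =>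
    have hb : a ≤ b := h b (Multiset.mem_cons_self _ _)
    have hs : ∀ x ∈ s, a ≤ x := fun x hx => h x (Multiset.mem_cons_of_mem hx)
    have h1 := ih hs
    have h2 : (0:ℝ) ≤ s.prod := le_trans (pow_nonneg ha _) h1
    simp only [Multiset.card_cons, Multiset.prod_cons, pow_succ]
    calc a ^ Multiset.card s * a ≤ s.prod * b :=
          mul_le_mul h1 hb ha h2
      _ = b * s.prod := mul_comm _ _

/-- The sequence `1/4, √(1/4), √√(1/4), …` increasing to `1`. -/
noncomputable def cc : ℕ → ℝ
  | 0 => 1/4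
  | k+1 => Real.sqrt (cc k)

lemma cc_bounds : ∀ k, 1/4 ≤ cc k ∧ cc k < 1 := by
  intro k
  induction k with
  | zero => norm_num [cc]
  | succ k ih =>
    obtain ⟨ih1, ih2⟩ := ih
    constructor
    · rw [cc]
      have : (1/2 : ℝ) ≤ Real.sqrt (cc k) := by
        rw [Real.le_sqrt (by norm_num) (by linarith)]
        norm_num; linarith
      linarith
    · rw [cc]
      have h1 : Real.sqrt (cc k) < Real.sqrt 1 := Real.sqrt_lt_sqrt (by linarith) ih2
      rwa [Real.sqrt_one] at h1

lemma cc_conv : ∀ k, 1 - cc k ≤ (2/3 : ℝ)^k := by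
  intro k
  induction k with
  | zero => norm_num [cc]
  | succ k ih =>
    obtain ⟨h1, h2⟩ := cc_bounds k
    have hs2 : Real.sqrt (cc k) ^ 2 = cc k := Real.sq_sqrt (by linarith)
    have hs12 : (1/2 : ℝ) ≤ Real.sqrt (cc k) := by
      rw [Real.le_sqrt (by norm_num) (by linarith)]; norm_num; linarith
    have key : 1 - Real.sqrt (cc k) ≤ (2/3) * (1 - cc k) := by nlinarith
    calc 1 - cc (k+1) = 1 - Real.sqrt (cc k) := by rw [cc]
      _ ≤ (2/3) * (1 - cc k) := key
      _ ≤ (2/3) * (2/3)^k := by linarith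
      _ = (2/3)^(k+1) := by ring

section Main

variable (μ : Measure ℝ) [IsProbabilityMeasure μ] (Φ : ℕ → Polynomial ℂ)

lemma integrable_comp {E : Type*} [NormedAddCommGroup E] (G : ℂ → E) (hG : Continuous G) :
    Integrable (fun t => G (ee t)) μ := by
  obtain ⟨C, hC⟩ := (isCompact_sphere (0:ℂ) 1).exists_bound_of_continuousOn hG.continuousOn
  refine (integrable_const C).mono' ((hG.comp ee_continuous).aestronglyMeasurable) ?_
  refine Filter.Eventually.of_forall (fun t => ?_)
  have : ee t ∈ Metric.sphere (0:ℂ) 1 := by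
    simp [mem_sphere_iff_norm, ee_abs]
  simpa using hC _ this

lemma integrable_F (p : Polynomial ℂ) : Integrable (FF p) μ :=
  integrable_comp μ (fun z => Complex.normSq (p.eval z))
    (Complex.continuous_normSq.comp p.continuous)

lemma ee_pow (k : ℕ) (t : ℝ) : Complex.exp (Complex.I * (k:ℕ) * t) = ee t ^ k := by
  rw [ee, show (Complex.I * ((k:ℕ):ℂ) * (t:ℝ)) = ((k:ℕ):ℂ) * (Complex.I * t) by ring,
    Complex.exp_nat_mul]

lemma orth_poly
    (horth : ∀ n : ℕ, (Φ n).Monic ∧ (Φ n).natDegree = n ∧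
      ∀ k < n, ∫ t, (Φ n).eval (Complex.exp (Complex.I * t)) *
        (starRingEnd ℂ) (Complex.exp (Complex.I * (k : ℕ) * t)) ∂μ = 0)
    (n : ℕ) (r : Polynomial ℂ) (hr : r.natDegree < n) :
    ∫ t, (Φ n).eval (ee t) * (starRingEnd ℂ) (r.eval (ee t)) ∂μ = 0 := by
  have hterm : ∀ t : ℝ, (Φ n).eval (ee t) * (starRingEnd ℂ) (r.eval (ee t)) =
      ∑ k ∈ Finset.range n, (starRingEnd ℂ) (r.coeff k) *
        ((Φ n).eval (ee t) * (starRingEnd ℂ) (ee t ^ k)) := by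
    intro t
    rw [Polynomial.eval_eq_sum_range' hr, map_sum, Finset.mul_sum]
    refine Finset.sum_congr rfl (fun k _ => ?_)
    rw [map_mul]; ring
  simp only [hterm]
  rw [MeasureTheory.integral_finset_sum]
  · refine Finset.sum_eq_zero (fun k hk => ?_)
    rw [MeasureTheory.integral_const_mul]
    have := (horth n).2.2 k (Finset.mem_range.mp hk)
    simp only [ee_pow k] at this
    rw [show (fun t : ℝ => (Φ n).eval (ee t) * (starRingEnd ℂ) (ee t ^ k))
        = fun t : ℝ => (Φ n).eval (Complex.exp (Complex.I * t)) *
          (starRingEnd ℂ) (ee t ^ k) from rfl]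
    rw [this, mul_zero]
  · intro k _
    exact integrable_comp μ
      (fun z => (starRingEnd ℂ) (r.coeff k) * (Polynomial.eval z (Φ n) * (starRingEnd ℂ) (z ^ k)))
      (continuous_const.mul ((Φ n).continuous.mul (continuous_star.comp (continuous_pow k))))

variable (horth : ∀ n : ℕ, (Φ n).Monic ∧ (Φ n).natDegree = n ∧
      ∀ k < n, ∫ t, (Φ n).eval (Complex.exp (Complex.I * t)) *
        (starRingEnd ℂ) (Complex.exp (Complex.I * (k : ℕ) * t)) ∂μ = 0)

include horth in
lemma min_norm (n : ℕ) (P : Polynomial ℂ) (hP : P.Monic) (hPd : P.natDegree = n) :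
    ∫ t, FF (Φ n) t ∂μ ≤ ∫ t, FF P t ∂μ := by
  obtain ⟨hM, hd, -⟩ := horth n
  by_cases hr0 : P - Φ n = 0
  · rw [sub_eq_zero.mp hr0]
  have hdeg : (P - Φ n).natDegree < n := by
    rw [Polynomial.natDegree_lt_iff_degree_lt hr0]
    have h1 : P.degree = (Φ n).degree := by
      rw [Polynomial.degree_eq_natDegree hP.ne_zero,
        Polynomial.degree_eq_natDegree hM.ne_zero, hPd, hd]
    have := Polynomial.degree_sub_lt h1 hP.ne_zero (by rw [hP.leadingCoeff, hM.leadingCoeff])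
    rwa [Polynomial.degree_eq_natDegree hP.ne_zero, hPd] at this
  have key : ∀ t : ℝ, FF P t = FF (Φ n) t + FF (P - Φ n) t +
      2 * ((Φ n).eval (ee t) * (starRingEnd ℂ) ((P - Φ n).eval (ee t))).re := by
    intro t
    have hPe : P.eval (ee t) = (Φ n).eval (ee t) + (P - Φ n).eval (ee t) := by
      rw [Polynomial.eval_sub]; ring
    rw [FF, hPe, Complex.normSq_add]; rfl
  have hig : Integrable (fun t => (Φ n).eval (ee t) *
      (starRingEnd ℂ) ((P - Φ n).eval (ee t))) μ :=
    integrable_comp μ (fun z => (Φ n).eval z * (starRingEnd ℂ) ((P - Φ n).eval z))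
      ((Φ n).continuous.mul (continuous_star.comp (P - Φ n).continuous))
  have hcross : ∫ t, 2 * ((Φ n).eval (ee t) *
      (starRingEnd ℂ) ((P - Φ n).eval (ee t))).re ∂μ = 0 := by
    rw [MeasureTheory.integral_const_mul]
    have hre : ∫ t, ((Φ n).eval (ee t) *
        (starRingEnd ℂ) ((P - Φ n).eval (ee t))).re ∂μ
        = (∫ t, (Φ n).eval (ee t) * (starRingEnd ℂ) ((P - Φ n).eval (ee t)) ∂μ).re := by
      exact_mod_cast integral_re hig
    rw [hre, orth_poly μ Φ horth n _ hdeg]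
    simp
  have hint1 : Integrable (fun t => FF (Φ n) t + FF (P - Φ n) t) μ :=
    (integrable_F μ (Φ n)).add (integrable_F μ (P - Φ n))
  have hint2 : Integrable (fun t => 2 * ((Φ n).eval (ee t) *
      (starRingEnd ℂ) ((P - Φ n).eval (ee t))).re) μ := by
    exact (integrable_comp μ (fun z => ((Φ n).eval z *
      (starRingEnd ℂ) ((P - Φ n).eval z)).re)
      (Complex.continuous_re.comp ((Φ n).continuous.mul
        (continuous_star.comp (P - Φ n).continuous)))).const_mul 2
  calc ∫ t, FF (Φ n) t ∂μ
      ≤ ∫ t, FF (Φ n) t ∂μ + ∫ t, FF (P - Φ n) t ∂μ := by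
        have : 0 ≤ ∫ t, FF (P - Φ n) t ∂μ :=
          integral_nonneg (fun t => Complex.normSq_nonneg _)
        linarith
    _ = ∫ t, (FF (Φ n) t + FF (P - Φ n) t) ∂μ + ∫ t, 2 * ((Φ n).eval (ee t) *
          (starRingEnd ℂ) ((P - Φ n).eval (ee t))).re ∂μ := by
        rw [hcross, add_zero, MeasureTheory.integral_add (integrable_F μ (Φ n))
          (integrable_F μ (P - Φ n))]
    _ = ∫ t, FF P t ∂μ := by
        rw [← MeasureTheory.integral_add hint1 hint2]
        exact integral_congr_ae (Filter.Eventually.of_forall (fun t => (key t).symm))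

include horth in
lemma norm_le_one (n : ℕ) : ∫ t, FF (Φ n) t ∂μ ≤ 1 := by
  have := min_norm μ Φ horth n (Polynomial.X ^ n) (Polynomial.monic_X_pow n)
    (Polynomial.natDegree_X_pow n)
  have hFX : ∀ t : ℝ, FF (Polynomial.X ^ n : Polynomial ℂ) t = 1 := by
    intro t
    rw [FF, Polynomial.eval_pow, Polynomial.eval_X, map_pow, ee_normSq, one_pow]
  calc ∫ t, FF (Φ n) t ∂μ ≤ ∫ t, FF (Polynomial.X ^ n : Polynomial ℂ) t ∂μ := this
    _ = 1 := by simp [hFX]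

lemma posint (hfin : ∀ s : Finset ℂ, μ {t : ℝ | Complex.exp (Complex.I * t) ∈ s} < 1)
    (q : Polynomial ℂ) (hq : q ≠ 0) : 0 < ∫ t, FF q t ∂μ := by
  rcases lt_or_eq_of_le (integral_nonneg (f := FF q) (fun t => Complex.normSq_nonneg (q.eval (ee t)))) with h | h
  · exact h
  exfalso
  have hae : FF q =ᵐ[μ] 0 :=
    (MeasureTheory.integral_eq_zero_iff_of_nonneg
      (fun t => Complex.normSq_nonneg (q.eval (ee t))) (integrable_F μ q)).mp h.symm
  have hsub : {t : ℝ | FF q t = 0} ⊆ {t : ℝ | Complex.exp (Complex.I * t) ∈ q.roots.toFinset} := by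
    intro t ht
    have heval : q.eval (ee t) = 0 := Complex.normSq_eq_zero.mp ht
    simp only [Set.mem_setOf_eq, Multiset.mem_toFinset]
    exact Polynomial.mem_roots'.mpr ⟨hq, heval⟩
  have h1 : (1 : ENNReal) ≤ μ {t : ℝ | FF q t = 0} := by
    have hu : (Set.univ : Set ℝ) ⊆ {t : ℝ | FF q t = 0} ∪ {t : ℝ | ¬ FF q t = 0} := by
      intro t _; by_cases hc : FF q t = 0
      · exact Or.inl hc
      · exact Or.inr hc
    have hz : μ {t : ℝ | ¬ FF q t = 0} = 0 := by
      have := hae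
      rw [Filter.EventuallyEq, MeasureTheory.ae_iff] at this
      simpa using this
    calc (1 : ENNReal) = μ Set.univ := by simp
      _ ≤ μ ({t : ℝ | FF q t = 0} ∪ {t : ℝ | ¬ FF q t = 0}) := measure_mono hu
      _ ≤ μ {t : ℝ | FF q t = 0} + μ {t : ℝ | ¬ FF q t = 0} := measure_union_le _ _
      _ = μ {t : ℝ | FF q t = 0} := by rw [hz, add_zero]
  exact absurd (lt_of_le_of_lt (le_trans h1 (measure_mono hsub)) (hfin q.roots.toFinset))
    (lt_irrefl _)

include horth in
lemma root_bound (hfin : ∀ s : Finset ℂ, μ {t : ℝ | Complex.exp (Complex.I * t) ∈ s} < 1)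
    (n : ℕ) (w : ℂ) (hw : (Φ n).IsRoot w) : ‖w‖ ≤ 2 := by
  by_contra hcon
  push_neg at hcon
  obtain ⟨hM, hd, -⟩ := horth n
  have hroot : (X - C w) * ((Φ n) /ₘ (X - C w)) = Φ n :=
    (Polynomial.mul_divByMonic_eq_iff_isRoot).mpr hw
  set q := (Φ n) /ₘ (X - C w) with hqdef
  have hqM : q.Monic := Polynomial.Monic.of_mul_monic_left (Polynomial.monic_X_sub_C w)
    (by rw [hroot]; exact hM)
  have hq0 : q ≠ 0 := hqM.ne_zero
  have hPd : (X * q).natDegree = n := by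
    have h1 : ((X - C w) * q).natDegree = n := by rw [hroot, hd]
    rw [Polynomial.natDegree_mul (Polynomial.X_sub_C_ne_zero w) hq0,
      Polynomial.natDegree_X_sub_C] at h1
    rw [Polynomial.natDegree_mul Polynomial.X_ne_zero hq0, Polynomial.natDegree_X]
    exact h1
  have hmin := min_norm μ Φ horth n (X * q) (Polynomial.monic_X.mul hqM) hPd
  have hFXq : ∀ t : ℝ, FF (X * q) t = FF q t := by
    intro t
    rw [FF, Polynomial.eval_mul, Polynomial.eval_X, Complex.normSq_mul, ee_normSq, one_mul]; rfl
  have hK : ∀ t : ℝ, (‖w‖ - 1)^2 * FF q t ≤ FF (Φ n) t := by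
    intro t
    have hFΦ : FF (Φ n) t = Complex.normSq (ee t - w) * FF q t := by
      rw [FF, ← hroot, Polynomial.eval_mul, Complex.normSq_mul]
      simp [FF]
    rw [hFΦ]
    have h1 : ‖w‖ - 1 ≤ ‖ee t - w‖ := by
      have h2 := norm_add_le (w - ee t) (ee t)
      have h3 : ‖w - ee t‖ = ‖ee t - w‖ := by
        rw [norm_sub_rev]
      have h4 : ‖ee t‖ = 1 := ee_abs t
      simp only [sub_add_cancel] at h2
      rw [h3] at h2; rw [h4] at h2; linarith
    have h5 : (‖w‖ - 1)^2 ≤ Complex.normSq (ee t - w) := by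
      rw [Complex.normSq_eq_norm_sq]
      have : (0:ℝ) ≤ ‖w‖ - 1 := by
        have := norm_nonneg w; linarith
      exact pow_le_pow_left₀ this h1 2
    exact mul_le_mul_of_nonneg_right h5 (Complex.normSq_nonneg _)
  have hint : ∫ t, (‖w‖ - 1)^2 * FF q t ∂μ ≤ ∫ t, FF (Φ n) t ∂μ :=
    integral_mono ((integrable_F μ q).const_mul _) (integrable_F μ (Φ n)) hK
  rw [MeasureTheory.integral_const_mul] at hint
  have hmax : ∫ t, FF (Φ n) t ∂μ ≤ ∫ t, FF q t ∂μ := by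
    calc ∫ t, FF (Φ n) t ∂μ ≤ ∫ t, FF (X * q) t ∂μ := hmin
      _ = ∫ t, FF q t ∂μ := by simp [hFXq]
  have hpos := posint μ hfin q hq0
  have hgt : (0:ℝ) < (‖w‖ - 1)^2 - 1 := by nlinarith
  nlinarith [mul_pos hgt hpos]

lemma roots_near
    (hrb : ∀ n w, (Φ n).IsRoot w → ‖w‖ ≤ 2)
    (hlim : {w : ℂ | ∀ ε : ℝ, 0 < ε → ∀ N : ℕ, ∃ n ≥ N, ∃ w' : ℂ,
            (Φ n).IsRoot w' ∧ ‖w' - w‖ < ε} = SS)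
    (δ : ℝ) (hδ : 0 < δ) :
    ∃ N, ∀ n ≥ N, ∀ w, (Φ n).IsRoot w → Metric.infDist w SS < δ := by
  have h' : ∀ z : ℂ, ∃ ε : ℝ, 0 < ε ∧ ∃ N : ℕ, ∀ n ≥ N, ∀ w' : ℂ,
      (Φ n).IsRoot w' → δ ≤ Metric.infDist z SS → ¬ ‖w' - z‖ < ε := by
    intro z
    by_cases hzS : δ ≤ Metric.infDist z SS
    · have hznot : z ∉ SS := by
        intro hmem
        rw [Metric.infDist_zero_of_mem hmem] at hzS
        linarith
      rw [← hlim] at hznot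
      simp only [Set.mem_setOf_eq, not_forall] at hznot
      push_neg at hznot
      obtain ⟨ε, hε, N, hN⟩ := hznot
      exact ⟨ε, hε, N, fun n hn w' hw' _ hlt =>
        absurd hlt (not_lt.mpr (hN n hn w' hw'))⟩
    · exact ⟨1, one_pos, 0, fun n _ w' _ h => absurd h hzS⟩
  choose ε hε N hN using h'
  have hK : IsCompact (Metric.closedBall (0:ℂ) 2 ∩ {z : ℂ | δ ≤ Metric.infDist z SS}) :=
    (isCompact_closedBall (0:ℂ) 2).inter_right
      (isClosed_le continuous_const (Metric.continuous_infDist_pt SS))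
  obtain ⟨T, hTK, hTc⟩ := hK.elim_nhds_subcover (fun z => Metric.ball z (ε z))
    (fun z _ => Metric.ball_mem_nhds z (hε z))
  refine ⟨T.sup N, fun n hn w hw => ?_⟩
  by_contra hcon
  push_neg at hcon
  have hwK : w ∈ Metric.closedBall (0:ℂ) 2 ∩ {z : ℂ | δ ≤ Metric.infDist z SS} := by
    constructor
    · rw [Metric.mem_closedBall, dist_zero_right]
      exact hrb n w hw
    · exact hcon
  obtain ⟨z, hzT, hwz⟩ := Set.mem_iUnion₂.mp (hTc hwK)
  exact hN z n (le_trans (Finset.le_sup hzT) hn) w hw (hTK z hzT).2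
    (by rwa [← dist_eq_norm, ← Metric.mem_ball])

lemma lb (hM : ∀ n : ℕ, (Φ n).Monic ∧ (Φ n).natDegree = n)
    (n : ℕ) (δ D : ℝ) (hδ : 0 ≤ δ) (hle : δ ≤ D)
    (hroots : ∀ w, (Φ n).IsRoot w → Metric.infDist w SS ≤ δ)
    (z : ℂ) (hz : D ≤ Metric.infDist z SS) :
    (D - δ)^n ≤ ‖(Φ n).eval z‖ := by
  obtain ⟨hMn, hdn⟩ := hM n
  have hsp := (IsAlgClosed.splits (Φ n)).eq_prod_roots_of_monic hMn
  have hcard : Multiset.card (Φ n).roots = n := by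
    rw [(Polynomial.splits_iff_card_roots).mp (IsAlgClosed.splits (Φ n)), hdn]
  have heval : ‖(Φ n).eval z‖ =
      (Multiset.map (fun a => ‖z - a‖) (Φ n).roots).prod := by
    conv_lhs => rw [hsp]
    rw [Polynomial.eval_multiset_prod, Multiset.map_map,
      ← normHom_apply, map_multiset_prod (normHom (α := ℂ)), Multiset.map_map]
    congr 1
    apply Multiset.map_congr rfl
    intro a _
    simp
  rw [heval]
  have := multiset_pow_card_le_prod
    (Multiset.map (fun a => ‖z - a‖) (Φ n).roots) (D - δ)
    (by linarith) ?_
  · rwa [Multiset.card_map, hcard] at this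
  · intro x hx
    obtain ⟨a, ha, rfl⟩ := Multiset.mem_map.mp hx
    have haroot : (Φ n).IsRoot a := Polynomial.isRoot_of_mem_roots ha
    have h1 : Metric.infDist a SS ≤ δ := hroots a haroot
    have h2 : Metric.infDist z SS ≤ Metric.infDist a SS + dist z a :=
      Metric.infDist_le_infDist_add_dist
    rw [Complex.dist_eq] at h2
    linarith

lemma distlow (γ : ℝ) (hγ : γ ≤ 1) (t : ℝ) (h : Real.cos t ≤ γ) :
    Real.sqrt (1 - γ^2 + (max (1/2 - γ) 0)^2) ≤ Metric.infDist (ee t) SS := by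
  by_contra hcon
  push_neg at hcon
  rw [Metric.infDist_lt_iff SS_nonempty] at hcon
  obtain ⟨y, hyS, hdy⟩ := hcon
  obtain ⟨hyim, hyre1, hyre2⟩ : y.im = 0 ∧ (1/2 : ℝ) ≤ y.re ∧ y.re ≤ 1 := by
    obtain ⟨h1, h2⟩ := hyS; exact ⟨h1, h2.1, h2.2⟩
  have hre : (ee t).re = Real.cos t := by
    rw [ee, mul_comm, Complex.exp_ofReal_mul_I_re]
  have him : (ee t).im = Real.sin t := by
    rw [ee, mul_comm, Complex.exp_ofReal_mul_I_im]
  have hdist : dist (ee t) y = Real.sqrt ((Real.cos t - y.re)^2 + (Real.sin t)^2) := by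
    rw [Complex.dist_eq, Complex.norm_def]
    congr 1
    rw [Complex.normSq_apply, Complex.sub_re, Complex.sub_im, hre, him, hyim]
    ring
  rw [hdist] at hdy
  have hA : 1 - γ^2 + (max (1/2 - γ) 0)^2 ≤ (Real.cos t - y.re)^2 + (Real.sin t)^2 := by
    have hsc := Real.sin_sq_add_cos_sq t
    set M := max (1/2 - γ) 0 with hM
    have hM0 : 0 ≤ M := le_max_right _ _
    have hM1 : 1/2 - γ ≤ M := le_max_left _ _
    rcases max_choice (1/2 - γ) 0 with hc | hc
    · rw [← hM] at hc
      have hγhalf : γ ≤ 1/2 := by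
        rw [hc] at hM0; linarith
      nlinarith [sq_nonneg (y.re - γ), mul_nonneg (show (0:ℝ) ≤ 2*y.re by linarith)
        (show (0:ℝ) ≤ γ - Real.cos t by linarith),
        mul_nonneg (show (0:ℝ) ≤ y.re - 1/2 by linarith)
        (show (0:ℝ) ≤ y.re + 1/2 - 2*γ by linarith)]
    · rw [← hM] at hc
      nlinarith [sq_nonneg (y.re - γ), mul_nonneg (show (0:ℝ) ≤ 2*y.re by linarith)
        (show (0:ℝ) ≤ γ - Real.cos t by linarith)]
  have := Real.sqrt_le_sqrt hA
  linarith [this, hdy]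

include horth in
lemma nb
    (hIco : μ (Set.Ico (-Real.pi) Real.pi)ᶜ = 0)
    (c : ℝ)
    (hnull : μ {t : ℝ | t ∈ Set.Ico (-Real.pi) Real.pi ∧ Real.cos t < c} = 0)
    (m : ℕ) : ∫ t, FF (Φ (2*m)) t ∂μ ≤ (1-c)^(2*m) := by
  have hae : ∀ᵐ t ∂μ, c ≤ Real.cos t := by
    have h1 : ∀ᵐ t ∂μ, t ∈ Set.Ico (-Real.pi) Real.pi := by
      rw [MeasureTheory.ae_iff]
      exact hIco
    have h2 : ∀ᵐ t ∂μ, t ∉ {t : ℝ | t ∈ Set.Ico (-Real.pi) Real.pi ∧ Real.cos t < c} :=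
      MeasureTheory.measure_eq_zero_iff_ae_notMem.mp hnull
    filter_upwards [h1, h2] with t ht1 ht2
    by_contra hcc
    exact ht2 ⟨ht1, lt_of_not_ge hcc⟩
  set a : ℂ := (1 : ℂ) + (c : ℝ) with ha
  set Q : Polynomial ℂ := X^2 - C a * X + 1 with hQ
  have hQeq : Q = C 1 * X^2 + C (-a) * X + C 1 := by rw [hQ]; simp; ring
  have hQM : Q.Monic := by
    have : Q = X^2 + (1 - C a * X) := by rw [hQ]; ring
    rw [this]
    apply Polynomial.monic_X_pow_add
    apply lt_of_le_of_lt (Polynomial.degree_sub_le 1 (C a * X))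
    have hd1 : (1 : Polynomial ℂ).degree ≤ 1 := by
      apply le_trans Polynomial.degree_one_le; norm_num
    have hd2 : (C a * X).degree ≤ 1 := Polynomial.degree_C_mul_X_le a
    have : max (1 : Polynomial ℂ).degree (C a * X).degree ≤ 1 := max_le hd1 hd2
    apply lt_of_le_of_lt this
    norm_num
  have hQd : Q.natDegree = 2 := by
    rw [hQeq]; exact Polynomial.natDegree_quadratic one_ne_zero
  set P : Polynomial ℂ := Q^m with hP
  have hPM : P.Monic := hQM.pow m
  have hPd : P.natDegree = 2*m := by
    rw [hP, Polynomial.natDegree_pow, hQd]; ring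
  have hmin := min_norm μ Φ horth (2*m) P hPM hPd
  have hbound : ∀ t : ℝ, c ≤ Real.cos t → FF P t ≤ (1-c)^(2*m) := by
    intro t hct
    have hfact : Q.eval (ee t) = ee t * ((2 * Real.cos t : ℝ) - a) := by
      rw [hQ]
      simp only [Polynomial.eval_add, Polynomial.eval_sub, Polynomial.eval_pow,
        Polynomial.eval_mul, Polynomial.eval_C, Polynomial.eval_X, Polynomial.eval_one]
      have hc2 : ((2 * Real.cos t : ℝ) : ℂ) = ee t + Complex.exp (-(Complex.I * t)) := by
        rw [Complex.ofReal_mul, Complex.ofReal_cos, ee]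
        rw [show Complex.I * (t:ℂ) = (t:ℂ) * Complex.I by ring,
          show -((t:ℂ) * Complex.I) = ((-t : ℂ)) * Complex.I by ring]
        rw [Complex.exp_mul_I, Complex.exp_mul_I, Complex.cos_neg, Complex.sin_neg]
        push_cast
        ring
      have hinv : ee t * Complex.exp (-(Complex.I * t)) = 1 := by
        rw [ee, ← Complex.exp_add]; simp
      rw [hc2, mul_sub, mul_add, hinv]
      ring
    have habsQ : ‖Q.eval (ee t)‖ ≤ 1 - c := by
      rw [hfact, norm_mul, ee_abs, one_mul]
      have : ((2 * Real.cos t : ℝ) : ℂ) - a = (((2 * Real.cos t - (1 + c)) : ℝ) : ℂ) := by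
        rw [ha]; push_cast; ring
      rw [this, Complex.norm_real, Real.norm_eq_abs]
      rw [abs_le]
      constructor
      · linarith
      · linarith [Real.cos_le_one t]
    have hFP : FF P t = (‖Q.eval (ee t)‖)^(2*m) := by
      rw [FF, hP, Polynomial.eval_pow, map_pow, Complex.normSq_eq_norm_sq,
        ← pow_mul]
    rw [hFP]
    exact pow_le_pow_left₀ (norm_nonneg _) habsQ _
  calc ∫ t, FF (Φ (2*m)) t ∂μ ≤ ∫ t, FF P t ∂μ := hmin
    _ ≤ ∫ _t, (1-c)^(2*m) ∂μ := by
        apply MeasureTheory.integral_mono_ae (integrable_F μ P) (integrable_const _)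
        filter_upwards [hae] with t ht
        exact hbound t ht
    _ = (1-c)^(2*m) := by simp

lemma kill (hM : ∀ n : ℕ, (Φ n).Monic ∧ (Φ n).natDegree = n)
    (c : ℝ) (hc1 : c ≤ 1)
    (hNB : ∀ m : ℕ, ∫ t, FF (Φ (2*m)) t ∂μ ≤ (1-c)^(2*m))
    (hnear : ∀ δ : ℝ, 0 < δ → ∃ N, ∀ n ≥ N, ∀ w, (Φ n).IsRoot w → Metric.infDist w SS < δ)
    (E : Set ℝ) (hE : MeasurableSet E) (D : ℝ) (hD : 0 < D) (hDc : 1 - c < D^2)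
    (hdist : ∀ t ∈ E, D ≤ Metric.infDist (ee t) SS) : μ E = 0 := by
  have hc1' : (0:ℝ) ≤ 1 - c := by linarith
  have hs : Real.sqrt (1-c) < D := by
    have h1 : Real.sqrt (1-c) < Real.sqrt (D^2) := Real.sqrt_lt_sqrt hc1' hDc
    rwa [Real.sqrt_sq hD.le] at h1
  have hsq0 : 0 ≤ Real.sqrt (1-c) := Real.sqrt_nonneg _
  set δ := (D - Real.sqrt (1-c))/2 with hδdef
  have hδ : 0 < δ := by rw [hδdef]; linarith
  have h1 : Real.sqrt (1-c) < D - δ := by rw [hδdef]; linarith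
  have h2 : 1 - c < (D - δ)^2 := by
    have := Real.sq_sqrt hc1'
    nlinarith
  have hDδ : 0 < D - δ := lt_of_le_of_lt hsq0 h1
  obtain ⟨N, hN⟩ := hnear δ hδ
  set A := (D - δ)^2 with hA
  have hApos : 0 < A := by positivity
  set ρ := (1-c)/A with hρ
  have hρ0 : 0 ≤ ρ := div_nonneg hc1' hApos.le
  have hρ1 : ρ < 1 := (div_lt_one hApos).mpr h2
  have key : ∀ m : ℕ, N ≤ 2*m → (μ E).toReal ≤ ρ^(2*m) := by
    intro m hm
    set n := 2*m with hn
    have hlow : ∀ t ∈ E, A^n ≤ FF (Φ n) t := by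
      intro t ht
      have hroot : ∀ w, (Φ n).IsRoot w → Metric.infDist w SS ≤ δ := fun w hw =>
        (hN n hm w hw).le
      have := lb Φ hM n δ D hδ.le (by linarith) hroot (ee t) (hdist t ht)
      have hsqle : ((D - δ)^n)^2 ≤ (‖(Φ n).eval (ee t)‖)^2 :=
        pow_le_pow_left₀ (by positivity) this 2
      have hFF : FF (Φ n) t = (‖(Φ n).eval (ee t)‖)^2 := by
        rw [FF, Complex.normSq_eq_norm_sq]
      rw [hFF, hA, ← pow_mul, mul_comm 2 n, pow_mul]
      exact hsqle
    have c1 : A^n * (μ E).toReal ≤ ∫ t in E, FF (Φ n) t ∂μ := by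
      have hconst : ∫ _t in E, A^n ∂μ = (μ E).toReal * A^n := by
        rw [MeasureTheory.setIntegral_const, smul_eq_mul, measureReal_def]
      have := MeasureTheory.setIntegral_mono_on
        (integrableOn_const (measure_ne_top μ E))
        ((integrable_F μ (Φ n)).integrableOn) hE hlow
      rw [hconst] at this
      linarith
    have c2 : ∫ t in E, FF (Φ n) t ∂μ ≤ ∫ t, FF (Φ n) t ∂μ :=
      MeasureTheory.setIntegral_le_integral (integrable_F μ (Φ n))
        (Filter.Eventually.of_forall (fun t => Complex.normSq_nonneg _))
    have c3 := hNB m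
    have hAn : 0 < A^n := by positivity
    rw [hρ, div_pow]
    rw [le_div_iff₀ hAn]
    calc (μ E).toReal * A^n = A^n * (μ E).toReal := by ring
      _ ≤ (1-c)^n := le_trans c1 (le_trans c2 c3)
  have htend : Filter.Tendsto (fun m : ℕ => ρ^(2*m)) Filter.atTop (nhds 0) := by
    have : ∀ m : ℕ, ρ^(2*m) = (ρ^2)^m := fun m => by rw [← pow_mul]
    simp only [this]
    apply tendsto_pow_atTop_nhds_zero_of_lt_one (by positivity)
    nlinarith
  have hle0 : (μ E).toReal ≤ 0 := by
    apply ge_of_tendsto htend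
    filter_upwards [Filter.eventually_atTop.mpr ⟨N, fun m hm => hm⟩] with m hm
    exact key m (by omega)
  have hnn := ENNReal.toReal_nonneg (a := μ E)
  have hE0 : (μ E).toReal = 0 := le_antisymm hle0 hnn
  rcases (ENNReal.toReal_eq_zero_iff _).mp hE0 with h | h
  · exact h
  · exact absurd h (measure_ne_top μ E)

include horth in
lemma killγ (hIco : μ (Set.Ico (-Real.pi) Real.pi)ᶜ = 0)
    (hnear : ∀ δ : ℝ, 0 < δ → ∃ N, ∀ n ≥ N, ∀ w, (Φ n).IsRoot w → Metric.infDist w SS < δ)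
    (c : ℝ) (hc1 : c ≤ 1)
    (hNB : ∀ m : ℕ, ∫ t, FF (Φ (2*m)) t ∂μ ≤ (1-c)^(2*m))
    (γ : ℝ) (hγ1 : γ ≤ 1)
    (hDsq : 1 - c < 1 - γ^2 + (max (1/2 - γ) 0)^2) :
    μ {t : ℝ | t ∈ Set.Ico (-Real.pi) Real.pi ∧ Real.cos t ≤ γ} = 0 := by
  have hM : ∀ n : ℕ, (Φ n).Monic ∧ (Φ n).natDegree = n := fun n => ⟨(horth n).1, (horth n).2.1⟩
  set Dsq := 1 - γ^2 + (max (1/2 - γ) 0)^2 with hDsqdef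
  have hDsq0 : 0 < Dsq := lt_of_le_of_lt (by linarith) hDsq
  have hE : MeasurableSet {t : ℝ | t ∈ Set.Ico (-Real.pi) Real.pi ∧ Real.cos t ≤ γ} := by
    apply MeasurableSet.inter
    · exact measurableSet_Ico
    · exact measurableSet_le Real.continuous_cos.measurable measurable_const
  apply kill μ Φ hM c hc1 hNB hnear _ hE (Real.sqrt Dsq)
    (Real.sqrt_pos.mpr hDsq0)
    (by rw [Real.sq_sqrt hDsq0.le]; exact hDsq)
  intro t ht
  exact distlow γ hγ1 t ht.2

end Main

/-- There is no probability measure `μ` on the unit circle with infinite support whose monic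
orthogonal polynomials `Φ n` have the interval `[1/2, 1]` as the set `L_μ` of limit points of
all their zeros.  Here `L_μ` is the set of `w` such that every neighborhood of `w` contains a
zero of `Φ n` for arbitrarily large `n`. -/
theorem no_measure_with_limit_set_interval :
    ¬ ∃ (μ : Measure ℝ) (Φ : ℕ → Polynomial ℂ),
        IsProbabilityMeasure μ ∧
        μ (Set.Ico (-Real.pi) Real.pi)ᶜ = 0 ∧
        (∀ s : Finset ℂ, μ {t : ℝ | Complex.exp (Complex.I * t) ∈ s} < 1) ∧
        (∀ n : ℕ, (Φ n).Monic ∧ (Φ n).natDegree = n ∧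
          ∀ k < n, ∫ t, (Φ n).eval (Complex.exp (Complex.I * t)) *
            (starRingEnd ℂ) (Complex.exp (Complex.I * (k : ℕ) * t)) ∂μ = 0) ∧
        {w : ℂ | ∀ ε : ℝ, 0 < ε → ∀ N : ℕ, ∃ n ≥ N, ∃ w' : ℂ,
            (Φ n).IsRoot w' ∧ ‖w' - w‖ < ε}
          = {z : ℂ | z.im = 0 ∧ z.re ∈ Set.Icc (1 / 2 : ℝ) 1} := by
  rintro ⟨μ, Φ, hprob, hIco, hfin, hΦ, hlim⟩
  haveI := hprob
  have hlim' : {w : ℂ | ∀ ε : ℝ, 0 < ε → ∀ N : ℕ, ∃ n ≥ N, ∃ w' : ℂ,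
      (Φ n).IsRoot w' ∧ ‖w' - w‖ < ε} = SS := hlim
  have hM : ∀ n : ℕ, (Φ n).Monic ∧ (Φ n).natDegree = n :=
    fun n => ⟨(hΦ n).1, (hΦ n).2.1⟩
  have hrb : ∀ n w, (Φ n).IsRoot w → ‖w‖ ≤ 2 :=
    fun n w hw => root_bound μ Φ hΦ hfin n w hw
  have hnear := roots_near Φ hrb hlim'
  -- from killing all `γ < b` to the open sublevel set
  have union_null : ∀ b : ℝ,
      (∀ γ : ℝ, γ < b → μ {t : ℝ | t ∈ Set.Ico (-Real.pi) Real.pi ∧ Real.cos t ≤ γ} = 0) →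
      μ {t : ℝ | t ∈ Set.Ico (-Real.pi) Real.pi ∧ Real.cos t < b} = 0 := by
    intro b hb
    have hsub : {t : ℝ | t ∈ Set.Ico (-Real.pi) Real.pi ∧ Real.cos t < b} ⊆
        ⋃ j : ℕ, {t : ℝ | t ∈ Set.Ico (-Real.pi) Real.pi ∧ Real.cos t ≤ b - 1/(j+1)} := by
      rintro t ⟨ht1, ht2⟩
      obtain ⟨j, hj⟩ := exists_nat_one_div_lt (show (0:ℝ) < b - Real.cos t by linarith)
      refine Set.mem_iUnion.mpr ⟨j, ht1, ?_⟩
      push_cast at hj ⊢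
      linarith
    refine measure_mono_null hsub (measure_iUnion_null fun j => hb _ ?_)
    have : (0:ℝ) < 1/((j:ℝ)+1) := by positivity
    linarith
  -- main induction
  have hNULL : ∀ k : ℕ,
      μ {t : ℝ | t ∈ Set.Ico (-Real.pi) Real.pi ∧ Real.cos t < cc k} = 0 := by
    intro k
    induction k with
    | zero =>
      apply union_null
      intro γ hγ
      have hγ' : γ < 1/4 := by simpa [cc] using hγ
      have hmax : max (1/2 - γ) 0 = 1/2 - γ := max_eq_left (by linarith)
      refine killγ μ Φ hΦ hIco hnear 0 (by norm_num)
        (fun m => by simpa using norm_le_one μ Φ hΦ (2*m)) γ (by linarith) ?_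
      rw [hmax]
      nlinarith
    | succ k ih =>
      apply union_null
      intro γ hγ
      have hγ' : γ < Real.sqrt (cc k) := by simpa [cc] using hγ
      obtain ⟨hck1, hck2⟩ := cc_bounds k
      obtain ⟨hck1', hck2'⟩ := cc_bounds (k+1)
      by_cases hcase : γ < cc k
      · refine measure_mono_null ?_ ih
        rintro t ⟨ht1, ht2⟩
        exact ⟨ht1, by linarith⟩
      · push_neg at hcase
        have hγ1 : γ ≤ 1 := by
          have : Real.sqrt (cc k) < 1 := by rw [← cc] at *; exact hck2'
          linarith
        refine killγ μ Φ hΦ hIco hnear (cc k) (by linarith)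
          (nb μ Φ hΦ hIco (cc k) ih) γ hγ1 ?_
        by_cases hhalf : γ < 1/2
        · have hmax : max (1/2 - γ) 0 = 1/2 - γ := max_eq_left (by linarith)
          rw [hmax]
          nlinarith
        · push_neg at hhalf
          have hγ0 : (0:ℝ) ≤ γ := by linarith
          have hsq : γ^2 < cc k := (Real.lt_sqrt hγ0).mp hγ'
          nlinarith [sq_nonneg (max (1/2 - γ) 0)]
  -- measure concentrates at cos t = 1
  have hfinal : μ {t : ℝ | t ∈ Set.Ico (-Real.pi) Real.pi ∧ Real.cos t < 1} = 0 := by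
    have hsub : {t : ℝ | t ∈ Set.Ico (-Real.pi) Real.pi ∧ Real.cos t < 1} ⊆
        ⋃ k : ℕ, {t : ℝ | t ∈ Set.Ico (-Real.pi) Real.pi ∧ Real.cos t < cc k} := by
      rintro t ⟨ht1, ht2⟩
      obtain ⟨k, hk⟩ := exists_pow_lt_of_lt_one (show (0:ℝ) < 1 - Real.cos t by linarith)
        (show (2/3 : ℝ) < 1 by norm_num)
      have := cc_conv k
      exact Set.mem_iUnion.mpr ⟨k, ht1, by linarith⟩
    exact measure_mono_null hsub (measure_iUnion_null hNULL)
  -- hence μ is concentrated at {0}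
  have hzero : μ ({0}ᶜ : Set ℝ) = 0 := by
    have hsub : ({0}ᶜ : Set ℝ) ⊆ (Set.Ico (-Real.pi) Real.pi)ᶜ ∪
        {t : ℝ | t ∈ Set.Ico (-Real.pi) Real.pi ∧ Real.cos t < 1} := by
      intro t ht
      have ht0 : t ≠ 0 := ht
      by_cases htI : t ∈ Set.Ico (-Real.pi) Real.pi
      · right
        refine ⟨htI, lt_of_le_of_ne (Real.cos_le_one t) ?_⟩
        intro hcos1
        obtain ⟨n, hn⟩ := (Real.cos_eq_one_iff t).mp hcos1
        have hπ := Real.pi_pos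
        obtain ⟨hI1, hI2⟩ := htI
        have hn0 : n = 0 := by
          rcases lt_trichotomy n 0 with h | h | h
          · have hc : (n:ℝ) ≤ -1 := by exact_mod_cast (by omega : n ≤ -1)
            nlinarith
          · exact h
          · have hc : (1:ℝ) ≤ (n:ℝ) := by exact_mod_cast (by omega : 1 ≤ n)
            nlinarith
        rw [hn0] at hn
        push_cast at hn
        simp at hn
        exact ht0 hn.symm
      · left; exact htI
    have := le_trans (measure_mono hsub)
      (measure_union_le (μ := μ) (Set.Ico (-Real.pi) Real.pi)ᶜ _)
    rw [hIco, hfinal, add_zero] at this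
    exact le_antisymm this zero_le
  -- contradiction with infinite support
  have h1le : (1 : ENNReal) ≤ μ {t : ℝ | Complex.exp (Complex.I * t) ∈ ({1} : Finset ℂ)} := by
    have hmem : ({0} : Set ℝ) ⊆ {t : ℝ | Complex.exp (Complex.I * t) ∈ ({1} : Finset ℂ)} := by
      intro t ht
      rw [Set.mem_singleton_iff] at ht
      subst ht
      simp
    calc (1 : ENNReal) = μ Set.univ := by simp
      _ = μ (({0} : Set ℝ) ∪ ({0}ᶜ : Set ℝ)) := by rw [Set.union_compl_self]
      _ ≤ μ ({0} : Set ℝ) + μ ({0}ᶜ : Set ℝ) := measure_union_le _ _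
      _ = μ ({0} : Set ℝ) := by rw [hzero, add_zero]
      _ ≤ _ := measure_mono hmem
  exact absurd (hfin {1}) (not_lt.mpr h1le)
end

section
/- Let Φ_n be a monic polynomial of degree n with all zeros in the open unit disk, and let a be any point in the open unit disk. Define conj(α) = a Φ_n(a) / Φ_n*(a). Then |α| < 1, and the polynomial Φ_{n+1}(z) = z Φ_n(z) − conj(α) Φ_n*(z) is a monic polynomial of degree n+1 vanishing at a. -/
open Complex Polynomial

lemma sqlt {a : ℂ} (ha : ‖a‖ < 1) : a.re ^ 2 + a.im ^ 2 < 1 := by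
  nlinarith [Complex.sq_norm a, Complex.normSq_apply a, norm_nonneg a,
    Complex.norm_def a]

lemma blaschke_le {a z : ℂ} (ha : ‖a‖ < 1) (hz : ‖z‖ < 1) :
    ‖a - z‖ ≤ ‖1 - (starRingEnd ℂ) z * a‖ := by
  have ha' := sqlt ha
  have hz' := sqlt hz
  have h1 : Complex.normSq (a - z) ≤ Complex.normSq (1 - (starRingEnd ℂ) z * a) := by
    simp only [Complex.normSq_apply, Complex.sub_re, Complex.sub_im, Complex.mul_re,
      Complex.mul_im, Complex.one_re, Complex.one_im, Complex.conj_re, Complex.conj_im]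
    nlinarith [sq_nonneg (a.re - z.re), sq_nonneg (a.im - z.im)]
  calc ‖a - z‖ = Real.sqrt (Complex.normSq (a - z)) := by
        rw [Complex.norm_def]
    _ ≤ Real.sqrt (Complex.normSq (1 - (starRingEnd ℂ) z * a)) := Real.sqrt_le_sqrt h1
    _ = ‖1 - (starRingEnd ℂ) z * a‖ := by rw [Complex.norm_def]

lemma blaschke_pos {a z : ℂ} (ha : ‖a‖ < 1) (hz : ‖z‖ < 1) :
    0 < ‖1 - (starRingEnd ℂ) z * a‖ := by
  have h : ‖(starRingEnd ℂ) z * a‖ < 1 := by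
    rw [norm_mul, RingHomIsometric.norm_map]
    calc ‖z‖ * ‖a‖ ≤ ‖z‖ * 1 := mul_le_mul_of_nonneg_left ha.le (norm_nonneg z)
      _ < 1 := by simpa using hz
  calc 0 < 1 - ‖(starRingEnd ℂ) z * a‖ := by linarith
    _ ≤ ‖1 - (starRingEnd ℂ) z * a‖ := by
        have := norm_sub_norm_le (1 : ℂ) ((starRingEnd ℂ) z * a)
        simpa using this

lemma norm_mprod (s : Multiset ℂ) : ‖s.prod‖ = (s.map norm).prod := by
  induction s using Multiset.induction with
  | empty => simp
  | cons z s ih => simp [norm_mul, ih]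

lemma rev_prod (s : Multiset (Polynomial ℂ)) :
    s.prod.reverse = (s.map reverse).prod := by
  induction s using Multiset.induction with
  | empty => simp [reverse]
  | cons p s ih => simp [reverse_mul_of_domain, ih]

lemma rev_linear (c : ℂ) : (X - C c).reverse = 1 - C c * X := by
  have hX : (X : Polynomial ℂ).reverse = 1 := by
    rw [reverse, natDegree_X, ← pow_one (X : Polynomial ℂ), reflect_monomial]
    rw [revAt_le (le_refl 1)]; simp
  rw [sub_eq_add_neg, ← C_neg, reverse_add_C, hX, natDegree_X, pow_one, C_neg]
  ring

lemma prod_le_prod_norm (a : ℂ) (ha : ‖a‖ < 1) (s : Multiset ℂ) (h : ∀ z ∈ s, ‖z‖ < 1) :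
    (s.map fun z => ‖a - z‖).prod ≤ (s.map fun z => ‖1 - (starRingEnd ℂ) z * a‖).prod := by
  induction s using Multiset.induction with
  | empty => simp
  | cons z s ih =>
    simp only [Multiset.map_cons, Multiset.prod_cons]
    have hz : ‖z‖ < 1 := h z (Multiset.mem_cons_self z s)
    have hs : ∀ w ∈ s, ‖w‖ < 1 := fun w hw => h w (Multiset.mem_cons_of_mem hw)
    apply mul_le_mul (blaschke_le ha hz) (ih hs)
    · exact Multiset.prod_nonneg (by intro x hx; obtain ⟨w, _, rfl⟩ := Multiset.mem_map.mp hx; positivity)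
    · exact (blaschke_pos ha hz).le

lemma prod_pos_norm (a : ℂ) (ha : ‖a‖ < 1) (s : Multiset ℂ) (h : ∀ z ∈ s, ‖z‖ < 1) :
    0 < (s.map fun z => ‖1 - (starRingEnd ℂ) z * a‖).prod := by
  induction s using Multiset.induction with
  | empty => simp
  | cons z s ih =>
    simp only [Multiset.map_cons, Multiset.prod_cons]
    exact mul_pos (blaschke_pos ha (h z (Multiset.mem_cons_self z s)))
      (ih fun w hw => h w (Multiset.mem_cons_of_mem hw))

/-- Alfaro–Vigil: let `Φ` be monic of degree `n` with all zeros in the open unit disk, let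
`a` be in the open unit disk, and define `α` by `conj α = a·Φ(a)/Φ*(a)`, where
`Φ* = (Φ.map conj).reverse` is the reversed polynomial.  Then `‖α‖ < 1`, and
`Ψ = z·Φ(z) - conj(α)·Φ*(z)` is a monic polynomial of degree `n+1` vanishing at `a`. -/
theorem alfaro_vigil_one_step (n : ℕ) (Φ : Polynomial ℂ) (hmonic : Φ.Monic)
    (hdeg : Φ.natDegree = n) (hzeros : ∀ w : ℂ, Φ.IsRoot w → ‖w‖ < 1)
    (a : ℂ) (ha : ‖a‖ < 1) (α : ℂ)
    (hα : (starRingEnd ℂ) α = a * Φ.eval a / ((Φ.map (starRingEnd ℂ)).reverse).eval a) :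
    ‖α‖ < 1 ∧
    (X * Φ - C ((starRingEnd ℂ) α) * (Φ.map (starRingEnd ℂ)).reverse).Monic ∧
    (X * Φ - C ((starRingEnd ℂ) α) * (Φ.map (starRingEnd ℂ)).reverse).natDegree = n + 1 ∧
    (X * Φ - C ((starRingEnd ℂ) α) * (Φ.map (starRingEnd ℂ)).reverse).eval a = 0 := by
  set Φs := (Φ.map (starRingEnd ℂ)).reverse with hΦs
  have hΦ : Φ = (Φ.roots.map fun z => X - C z).prod :=
    (IsAlgClosed.splits Φ).eq_prod_roots_of_monic hmonic
  have hroots : ∀ z ∈ Φ.roots, ‖z‖ < 1 := fun z hz =>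
    hzeros z ((mem_roots hmonic.ne_zero).mp hz)
  have hΦsprod : Φs = (Φ.roots.map fun z => 1 - C ((starRingEnd ℂ) z) * X).prod := by
    rw [hΦs]
    conv_lhs => rw [hΦ]
    rw [Polynomial.map_multiset_prod, rev_prod]
    simp only [Multiset.map_map]
    refine congrArg Multiset.prod (Multiset.map_congr rfl fun z hz => ?_)
    simp only [Function.comp_apply, Polynomial.map_sub, Polynomial.map_X, Polynomial.map_C]
    exact rev_linear _
  have hevalΦ : ‖Φ.eval a‖ = (Φ.roots.map fun z => ‖a - z‖).prod := by
    conv_lhs => rw [hΦ]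
    rw [eval_multiset_prod, Multiset.map_map, norm_mprod, Multiset.map_map]
    refine congrArg Multiset.prod (Multiset.map_congr rfl fun z hz => ?_)
    simp
  have hevalΦs : ‖Φs.eval a‖ = (Φ.roots.map fun z => ‖1 - (starRingEnd ℂ) z * a‖).prod := by
    rw [hΦsprod, eval_multiset_prod, Multiset.map_map, norm_mprod, Multiset.map_map]
    refine congrArg Multiset.prod (Multiset.map_congr rfl fun z hz => ?_)
    simp
  have hQpos : 0 < ‖Φs.eval a‖ := by
    rw [hevalΦs]; exact prod_pos_norm a ha _ hroots
  have hne : Φs.eval a ≠ 0 := by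
    intro h; rw [h] at hQpos; simp at hQpos
  have hkey : ‖a * Φ.eval a‖ < ‖Φs.eval a‖ := by
    rw [norm_mul]
    calc ‖a‖ * ‖Φ.eval a‖ ≤ ‖a‖ * ‖Φs.eval a‖ := by
          apply mul_le_mul_of_nonneg_left _ (norm_nonneg a)
          rw [hevalΦ, hevalΦs]; exact prod_le_prod_norm a ha _ hroots
      _ < 1 * ‖Φs.eval a‖ := mul_lt_mul_of_pos_right ha hQpos
      _ = ‖Φs.eval a‖ := one_mul _
  have hαlt : ‖α‖ < 1 := by
    have h2 : ‖(starRingEnd ℂ) α‖ < 1 := by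
      rw [hα, norm_div, div_lt_one hQpos]
      exact hkey
    rwa [RingHomIsometric.norm_map] at h2
  have hdegΦs : Φs.natDegree ≤ n := by
    calc Φs.natDegree ≤ (Φ.map (starRingEnd ℂ)).natDegree := by
          rw [reverse_natDegree]; omega
      _ = n := by rw [natDegree_map, hdeg]
  have hXΦ : (X * Φ).Monic := (monic_X).mul hmonic
  have hdegXΦ : (X * Φ).natDegree = n + 1 := by
    rw [natDegree_mul X_ne_zero hmonic.ne_zero, natDegree_X, hdeg]; omega
  have hdeglt : (C ((starRingEnd ℂ) α) * Φs).natDegree < (X * Φ).natDegree := by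
    rw [hdegXΦ]
    exact lt_of_le_of_lt (le_trans (natDegree_C_mul_le _ _) hdegΦs) (Nat.lt_succ_self n)
  have hmonicΨ : (X * Φ - C ((starRingEnd ℂ) α) * Φs).Monic := by
    rw [sub_eq_add_neg]
    apply hXΦ.add_of_left
    rw [degree_neg]
    apply lt_of_le_of_lt degree_le_natDegree
    rw [degree_eq_natDegree hXΦ.ne_zero]
    exact_mod_cast hdeglt
  refine ⟨hαlt, hmonicΨ, ?_, ?_⟩
  · rw [natDegree_sub_eq_left_of_natDegree_lt hdeglt, hdegXΦ]
  · rw [eval_sub, eval_mul, eval_mul, eval_X, eval_C, hα, div_mul_cancel₀ _ hne, sub_self]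
end

section
/- Let μ be a measure on the unit circle of the form μ = Σ_{j} m_j δ_{Q_j} + ν, where Q_1, …, Q_m are distinct points on the unit circle, each m_j > 0, and ν is a measure on the closed unit disk boundary circle with total mass ‖ν‖. Fix γ > 0 smaller than half the minimal distance between the Q_j, and let ρ > 0 be such that every monic polynomial R of degree m whose zeros avoid at least one of the disks D_γ(Q_j) satisfies max_j |R(Q_j)| > ρ. If ‖ν‖ < 2^{−2m} ρ² min_j m_j, then the m-th monic orthogonal polynomial Φ_m(μ) has exactly one zero in each disk D_γ(Q_j). -/
open Complex Polynomial MeasureTheory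

/-- Let `μ = Σ_j m_j δ_{Q_j} + ν` where `Q_1,…,Q_m` are distinct points of the unit circle,
`m_j > 0`, and `ν` is a measure on the unit circle.  Fix `γ > 0` smaller than half the minimal
distance between the `Q_j`, and `ρ > 0` such that every monic polynomial of degree `m` whose
zeros avoid at least one disk `D_γ(Q_j)` has `max_j |R(Q_j)| > ρ`.  If
`‖ν‖ < 2^{-2m} ρ² min_j m_j`, then the `m`-th monic orthogonal polynomial `Φ_m(μ)` (the monic
minimizer of the `L²(μ)`-norm in degree `m`) has exactly one zero in each disk `D_γ(Q_j)`. -/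
theorem one_zero_in_each_disk (m : ℕ) (hm : 0 < m) (Q : Fin m → ℂ)
    (hQinj : Function.Injective Q) (hQcirc : ∀ j, ‖Q j‖ = 1)
    (mass : Fin m → ℝ) (hmass : ∀ j, 0 < mass j)
    (ν : Measure ℂ) [IsFiniteMeasure ν] (hνcirc : ν {z : ℂ | ‖z‖ = 1}ᶜ = 0)
    (γ : ℝ) (hγ : 0 < γ) (hγsep : ∀ i j, i ≠ j → 2 * γ < dist (Q i) (Q j))
    (ρ : ℝ) (hρ : 0 < ρ)
    (hρprop : ∀ r : Fin m → ℂ, (∃ j, ∀ i, γ ≤ dist (r i) (Q j)) →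
      ∃ j, ρ < ‖(∏ i, (X - C (r i)) : Polynomial ℂ).eval (Q j)‖)
    (hsmall : ν Set.univ < ENNReal.ofReal ((2 : ℝ) ^ (-(2 * m : ℤ)) * ρ ^ 2 * ⨅ j, mass j))
    (μ : Measure ℂ)
    (hμ : μ = (∑ j, ENNReal.ofReal (mass j) • Measure.dirac (Q j)) + ν)
    (Φ : Polynomial ℂ) (hΦm : Φ.Monic) (hΦd : Φ.natDegree = m)
    (hmin : ∀ R : Polynomial ℂ, R.Monic → R.natDegree = m →
      ∫ z, ‖Φ.eval z‖ ^ 2 ∂μ ≤ ∫ z, ‖R.eval z‖ ^ 2 ∂μ) :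
    ∃ r : Fin m → ℂ, Φ = ∏ i, (X - C (r i)) ∧
      ∀ j, ∃! i, r i ∈ Metric.ball (Q j) γ := by
  classical
  haveI : Nonempty (Fin m) := ⟨⟨0, hm⟩⟩
  have hcard : Multiset.card Φ.roots = m := by
    rw [Polynomial.splits_iff_card_roots.mp (IsAlgClosed.splits Φ), hΦd]
  set L := Φ.roots.toList with hL
  have hLlen : L.length = m := by rw [hL, Multiset.length_toList, hcard]
  set r : Fin m → ℂ := fun i => L.get (finCongr hLlen.symm i) with hrdef
  have hprod : Φ = ∏ i, (X - C (r i)) := by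
    have h1 : (Multiset.map (fun a => X - C a) Φ.roots).prod = Φ :=
      prod_multiset_X_sub_C_of_monic_of_roots_card_eq hΦm (by rw [hcard, hΦd])
    calc Φ = (Multiset.map (fun a => X - C a) Φ.roots).prod := h1.symm
      _ = (L.map (fun a => X - C a)).prod := by
            rw [← Multiset.coe_toList Φ.roots]; rfl
      _ = ∏ i : Fin L.length, (X - C (L.get i)) := by
            conv_lhs => rw [← List.ofFn_get L]
            rw [List.map_ofFn, List.prod_ofFn]; rfl
      _ = ∏ i, (X - C (r i)) :=
            (Equiv.prod_comp (finCongr hLlen.symm) (fun j => X - C (L.get j))).symm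
  -- every disk contains at least one root
  have hball : ∀ j, ∃ i, r i ∈ Metric.ball (Q j) γ := by
    by_contra hcon
    push_neg at hcon
    obtain ⟨j0, hj0⟩ := hcon
    have hj0' : ∀ i, γ ≤ dist (r i) (Q j0) := fun i =>
      not_lt.mp (by simpa [Metric.mem_ball] using hj0 i)
    obtain ⟨j', hj'⟩ := hρprop r ⟨j0, hj0'⟩
    rw [← hprod] at hj'
    set Rp : Polynomial ℂ := ∏ i, (X - C (Q i)) with hRp
    have hRm : Rp.Monic := monic_prod_of_monic _ _ fun i _ => monic_X_sub_C _
    have hRd : Rp.natDegree = m := by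
      rw [hRp, natDegree_prod _ _ fun i _ => X_sub_C_ne_zero _]
      simp [natDegree_X_sub_C]
    have hdec : ∀ f : ℂ → ENNReal, ∫⁻ z, f z ∂μ
        = (∑ j, ENNReal.ofReal (mass j) * f (Q j)) + ∫⁻ z, f z ∂ν := by
      intro f
      rw [hμ, lintegral_add_measure, lintegral_finset_sum_measure]
      congr 1
      exact Finset.sum_congr rfl fun j _ => by rw [lintegral_smul_measure, lintegral_dirac, smul_eq_mul]
    have haec : ∀ᵐ z ∂ν, ‖z‖ = 1 := by
      rw [MeasureTheory.ae_iff]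
      simpa [Set.compl_setOf] using hνcirc
    set I := ⨅ j, mass j with hIdef
    have hIle : ∀ j, I ≤ mass j := fun j =>
      ciInf_le (Set.Finite.bddBelow (Set.finite_range mass)) j
    have hIpos : 0 < I := by
      obtain ⟨j0', hj0'⟩ := exists_eq_ciInf_of_finite (f := mass)
      have := hmass j0'
      rwa [hj0', ← hIdef] at this
    have hrepr : ∀ P : Polynomial ℂ, ∫ z, ‖P.eval z‖ ^ 2 ∂μ
        = (∫⁻ z, ENNReal.ofReal (‖P.eval z‖ ^ 2) ∂μ).toReal := by
      intro P
      refine integral_eq_lintegral_of_nonneg_ae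
        (Filter.Eventually.of_forall fun z => by positivity) ?_
      exact ((Polynomial.continuous P).norm.pow 2).aestronglyMeasurable
    have hνpart : ∀ (f : ℂ → ℝ) (Cb : ℝ), (∀ z, ‖z‖ = 1 → f z ≤ Cb) →
        ∫⁻ z, ENNReal.ofReal (f z) ∂ν ≤ ENNReal.ofReal Cb * ν Set.univ := by
      intro f Cb hCb
      calc ∫⁻ z, ENNReal.ofReal (f z) ∂ν ≤ ∫⁻ _, ENNReal.ofReal Cb ∂ν :=
            lintegral_mono_ae (haec.mono fun z hz => ENNReal.ofReal_le_ofReal (hCb z hz))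
        _ = ENNReal.ofReal Cb * ν Set.univ := lintegral_const _
    obtain ⟨Cb, hCb⟩ := (isCompact_sphere (0:ℂ) 1).exists_bound_of_continuousOn
      (((Polynomial.continuous Φ).norm.pow 2).continuousOn)
    have hΦν : ∫⁻ z, ENNReal.ofReal (‖Φ.eval z‖ ^ 2) ∂ν
        ≤ ENNReal.ofReal Cb * ν Set.univ := by
      refine hνpart _ Cb fun z hz => ?_
      have hzs : z ∈ Metric.sphere (0:ℂ) 1 := by
        simpa [mem_sphere_iff_norm] using hz
      exact (le_abs_self _).trans (by simpa [Real.norm_eq_abs] using hCb z hzs)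
    set LΦ := ∫⁻ z, ENNReal.ofReal (‖Φ.eval z‖ ^ 2) ∂μ with hLΦ
    set LR := ∫⁻ z, ENNReal.ofReal (‖Rp.eval z‖ ^ 2) ∂μ with hLR
    have hLΦtop : LΦ ≠ ⊤ := by
      rw [hLΦ, hdec]
      refine ENNReal.add_ne_top.mpr ⟨?_, ?_⟩
      · exact (ENNReal.sum_lt_top.mpr fun j _ =>
          ENNReal.mul_lt_top ENNReal.ofReal_lt_top ENNReal.ofReal_lt_top).ne
      · exact (hΦν.trans_lt
          (ENNReal.mul_lt_top ENNReal.ofReal_lt_top (measure_lt_top ν _))).ne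
    have hRcirc : ∀ z : ℂ, ‖z‖ = 1 → ‖Rp.eval z‖ ^ 2 ≤ 2 ^ (2 * m) := by
      intro z hz
      have h1 : ‖Rp.eval z‖ ≤ 2 ^ m := by
        rw [hRp, eval_prod, norm_prod]
        calc ∏ i, ‖eval z (X - C (Q i))‖ ≤ ∏ _i : Fin m, (2:ℝ) := by
              refine Finset.prod_le_prod (fun i _ => norm_nonneg _) fun i _ => ?_
              simp only [eval_sub, eval_X, eval_C]
              calc ‖z - Q i‖ ≤ ‖z‖ + ‖Q i‖ := norm_sub_le _ _
                _ = 2 := by rw [hz, hQcirc i]; norm_num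
          _ = 2 ^ m := by simp
      calc ‖Rp.eval z‖ ^ 2 ≤ (2 ^ m) ^ 2 := pow_le_pow_left₀ (norm_nonneg _) h1 2
        _ = 2 ^ (2 * m) := by rw [← pow_mul, Nat.mul_comm]
    have hReval0 : ∀ j, Rp.eval (Q j) = 0 := by
      intro j
      rw [hRp, eval_prod]
      exact Finset.prod_eq_zero (Finset.mem_univ j) (by simp)
    have hLRbound : LR < ENNReal.ofReal (ρ ^ 2 * I) := by
      rw [hLR, hdec]
      have h0 : (∑ j, ENNReal.ofReal (mass j) * ENNReal.ofReal (‖Rp.eval (Q j)‖ ^ 2)) = 0 := by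
        refine Finset.sum_eq_zero fun j _ => ?_
        rw [hReval0 j]; simp
      rw [h0, zero_add]
      calc ∫⁻ z, ENNReal.ofReal (‖Rp.eval z‖ ^ 2) ∂ν
            ≤ ENNReal.ofReal ((2:ℝ) ^ (2 * m)) * ν Set.univ := hνpart _ _ hRcirc
        _ < ENNReal.ofReal ((2:ℝ) ^ (2 * m))
              * ENNReal.ofReal ((2 : ℝ) ^ (-(2 * m : ℤ)) * ρ ^ 2 * I) := by
            rw [ENNReal.mul_lt_mul_iff_right
              (ENNReal.ofReal_pos.mpr (by positivity)).ne' ENNReal.ofReal_ne_top]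
            exact hsmall
        _ = ENNReal.ofReal (ρ ^ 2 * I) := by
            rw [← ENNReal.ofReal_mul (by positivity)]
            congr 1
            rw [show (-(2 * m : ℤ)) = -((2 * m : ℕ) : ℤ) by push_cast; ring,
              zpow_neg, zpow_natCast]
            have h2m : (0:ℝ) < 2 ^ (2 * m) := by positivity
            field_simp
    have hLΦlow : ENNReal.ofReal (ρ ^ 2 * I) ≤ LΦ := by
      rw [hLΦ, hdec]
      have h1 : ENNReal.ofReal (ρ ^ 2 * I)
          ≤ ENNReal.ofReal (mass j') * ENNReal.ofReal (‖Φ.eval (Q j')‖ ^ 2) := by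
        rw [← ENNReal.ofReal_mul (hmass j').le]
        refine ENNReal.ofReal_le_ofReal ?_
        calc ρ ^ 2 * I ≤ ‖Φ.eval (Q j')‖ ^ 2 * mass j' := by
              refine mul_le_mul (pow_le_pow_left₀ hρ.le hj'.le 2) (hIle j') hIpos.le
                (by positivity)
          _ = mass j' * ‖Φ.eval (Q j')‖ ^ 2 := mul_comm _ _
      refine h1.trans (le_trans ?_ le_self_add)
      exact Finset.single_le_sum
        (f := fun j => ENNReal.ofReal (mass j) * ENNReal.ofReal (‖Φ.eval (Q j)‖ ^ 2))
        (fun j _ => zero_le') (Finset.mem_univ j')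
    have hle := hmin Rp hRm hRd
    rw [hrepr Φ, hrepr Rp, ← hLΦ, ← hLR] at hle
    have hLRtop : LR ≠ ⊤ := ne_top_of_lt (hLRbound.trans ENNReal.ofReal_lt_top)
    have hfin : LΦ ≤ LR := (ENNReal.toReal_le_toReal hLΦtop hLRtop).mp hle
    exact absurd (hLΦlow.trans_lt (hfin.trans_lt hLRbound)) (lt_irrefl _)
  -- counting: exactly one root index per disk
  refine ⟨r, hprod, fun j => ?_⟩
  set S : Fin m → Finset (Fin m) :=
    fun k => Finset.univ.filter (fun i => r i ∈ Metric.ball (Q k) γ) with hS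
  have hdisj : ∀ k k', k ≠ k' → Disjoint (S k) (S k') := by
    intro k k' hkk'
    rw [Finset.disjoint_left]
    intro i hik hik'
    simp only [hS, Finset.mem_filter, Metric.mem_ball] at hik hik'
    have htri : dist (Q k) (Q k') ≤ dist (r i) (Q k) + dist (r i) (Q k') := by
      rw [dist_comm (r i) (Q k)]; exact dist_triangle _ _ _
    linarith [hik.2, hik'.2, hγsep k k' hkk']
  have hsum : ∑ k, (S k).card ≤ m := by
    rw [← Finset.card_biUnion (fun k _ k' _ hkk' => hdisj k k' hkk')]
    calc (Finset.univ.biUnion S).card ≤ (Finset.univ : Finset (Fin m)).card :=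
          Finset.card_le_card (Finset.subset_univ _)
      _ = m := by simp
  have hone : ∀ k, 1 ≤ (S k).card := by
    intro k
    obtain ⟨i, hi⟩ := hball k
    exact Finset.card_pos.mpr ⟨i, Finset.mem_filter.mpr ⟨Finset.mem_univ _, hi⟩⟩
  have hcard1 : (S j).card = 1 := by
    by_contra hne
    have h2 : 2 ≤ (S j).card := by have := hone j; omega
    have hlt : ∑ _k : Fin m, 1 < ∑ k, (S k).card :=
      Finset.sum_lt_sum (fun k _ => hone k) ⟨j, Finset.mem_univ j, by omega⟩
    simp only [Finset.sum_const, Finset.card_univ, Fintype.card_fin, smul_eq_mul,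
      mul_one] at hlt
    omega
  obtain ⟨i, hi⟩ := Finset.card_eq_one.mp hcard1
  refine ⟨i, ?_, ?_⟩
  · have hmem : i ∈ S j := hi ▸ Finset.mem_singleton_self i
    exact (Finset.mem_filter.mp hmem).2
  · intro i' hi'
    have hmem : i' ∈ S j := Finset.mem_filter.mpr ⟨Finset.mem_univ _, hi'⟩
    rw [hi] at hmem
    exact Finset.mem_singleton.mp hmem
end
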